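/- Let N : ℕ → ℕ be a function. For each dimension d ≥ 1, let X₁, …, X_{N(d)}, x be N(d)+1 independent random points, each uniformly distributed on the closed unit ball of ℝ^d, and let p_d denote the probability that x lies in the convex hull of {X₁, …, X_{N(d)}}. If N(d) · d · 2^{-d/2} → 0 as d → ∞, then p_d → 0 as d → ∞. -/

import Mathlib

/-!
Every point `x` of the convex hull of points `Xᵢ` of the unit ball has some `Xᵢ` with
`⟪Xᵢ, x⟫ ≥ ‖x‖²` (otherwise a half-space would separate `x` from the `Xᵢ`). For such an `Xᵢ`,
`‖Xᵢ - x‖² ≤ 1 - ‖x‖²`, so with `ρ = 2^(-1/2)` either `‖x‖ < ρ` or `x` lies within `ρ` of some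
`Xᵢ`. Each of these `N + 1` events has probability at most `ρ^d = 2^(-d/2)`, whence the
interpolation probability is at most `(N + 1) 2^(-d/2)`.
-/

open MeasureTheory Filter

/-- The uniform probability measure on the closed unit ball of `ℝ^d`. -/
noncomputable def uniformBall (d : ℕ) : Measure (EuclideanSpace ℝ (Fin d)) :=
  (volume (Metric.closedBall (0 : EuclideanSpace ℝ (Fin d)) 1))⁻¹ •
    volume.restrict (Metric.closedBall (0 : EuclideanSpace ℝ (Fin d)) 1)

/-- The probability that a new uniform sample from the unit ball of `ℝ^d` lies in the
convex hull of `n` i.i.d. uniform samples from that ball. -/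
noncomputable def interpProb (d n : ℕ) : ENNReal :=
  ((Measure.pi fun _ : Fin n => uniformBall d).prod (uniformBall d))
    {p | p.2 ∈ convexHull ℝ (Set.range p.1)}

open Metric

section Geometry

variable {E : Type*} [NormedAddCommGroup E] [InnerProductSpace ℝ E]

theorem exists_mem_norm_sq_le_inner_of_mem_convexHull {s : Set E} {x : E}
    (hx : x ∈ convexHull ℝ s) : ∃ y ∈ s, ‖x‖ ^ 2 ≤ inner ℝ x y := by
  by_contra! h
  have hhalf : Convex ℝ {y : E | inner ℝ x y < ‖x‖ ^ 2} :=
    convex_halfSpace_lt (innerₛₗ ℝ x).isLinear _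
  have hxx : inner ℝ x x < ‖x‖ ^ 2 := convexHull_min h hhalf hx
  rw [real_inner_self_eq_norm_sq] at hxx
  exact lt_irrefl _ hxx

theorem convexHull_subset_ball_union_closedBall {s : Set E} (hs : s ⊆ closedBall 0 1) {ρ : ℝ}
    (hρ0 : 0 ≤ ρ) (hρ : 1 ≤ 2 * ρ ^ 2) :
    convexHull ℝ s ⊆ ball 0 ρ ∪ ⋃ y ∈ s, closedBall y ρ := by
  intro x hx
  rw [Set.mem_union, mem_ball_zero_iff, Set.mem_iUnion₂, or_iff_not_imp_left, not_lt]
  intro hxρ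
  obtain ⟨y, hys, hxy⟩ := exists_mem_norm_sq_le_inner_of_mem_convexHull hx
  have hy : ‖y‖ ≤ 1 := mem_closedBall_zero_iff.1 (hs hys)
  have hρx : ρ ^ 2 ≤ ‖x‖ ^ 2 := pow_le_pow_left₀ hρ0 hxρ 2
  have hdist : ‖x - y‖ ^ 2 ≤ ρ ^ 2 := by
    rw [norm_sub_sq_real]
    nlinarith [norm_nonneg y]
  exact ⟨y, hys, mem_closedBall_iff_norm.2 (pow_le_pow_iff_left₀ (norm_nonneg _) hρ0
    two_ne_zero |>.1 hdist)⟩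

end Geometry

instance (d : ℕ) : IsProbabilityMeasure (uniformBall d) := by
  constructor
  rw [uniformBall, Measure.smul_apply, Measure.restrict_apply MeasurableSet.univ,
    Set.univ_inter, smul_eq_mul, ENNReal.inv_mul_cancel (measure_closedBall_pos volume _ one_pos).ne'
      measure_closedBall_lt_top.ne]

theorem ae_mem_closedBall_uniformBall (d : ℕ) :
    ∀ᵐ y ∂uniformBall d, y ∈ closedBall (0 : EuclideanSpace ℝ (Fin d)) 1 :=
  (ae_restrict_mem measurableSet_closedBall).filter_mono (Measure.ae_smul_measure_le _)

theorem uniformBall_closedBall_le (d : ℕ) (z : EuclideanSpace ℝ (Fin d)) {r : ℝ} (hr : 0 ≤ r) :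
    uniformBall d (closedBall z r) ≤ ENNReal.ofReal (r ^ d) := by
  set B := closedBall (0 : EuclideanSpace ℝ (Fin d)) 1
  have hB0 : volume B ≠ 0 := (measure_closedBall_pos volume _ one_pos).ne'
  have hBtop : volume B ≠ ⊤ := measure_closedBall_lt_top.ne
  have hvol : volume (closedBall z r) ≤ ENNReal.ofReal (r ^ d) * volume B := by
    rw [Measure.addHaar_closedBall volume z hr, finrank_euclideanSpace_fin]
    exact mul_le_mul_right (measure_mono ball_subset_closedBall) _
  rw [uniformBall, Measure.smul_apply, Measure.restrict_apply measurableSet_closedBall,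
    smul_eq_mul, ENNReal.inv_mul_le_iff hB0 hBtop, mul_comm]
  exact (measure_mono Set.inter_subset_left).trans hvol

theorem prod_setOf_dist_le_le {α E : Type*} [MeasurableSpace α] [PseudoMetricSpace E]
    [MeasurableSpace E] [OpensMeasurableSpace E] [SecondCountableTopology E]
    (μ : Measure α) [IsProbabilityMeasure μ] (ν : Measure E) [SFinite ν] {f : α → E}
    (hf : Measurable f) {r : ℝ} {c : ENNReal} (hc : ∀ z, ν (closedBall z r) ≤ c) :
    μ.prod ν {p | dist (f p.1) p.2 ≤ r} ≤ c := by
  have hmeas : Measurable fun p : α × E => dist (f p.1) p.2 :=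
    (hf.comp measurable_fst).dist measurable_snd
  rw [Measure.prod_apply (measurableSet_le hmeas measurable_const)]
  calc ∫⁻ a, ν (Prod.mk a ⁻¹' {p | dist (f p.1) p.2 ≤ r}) ∂μ ≤ ∫⁻ _, c ∂μ :=
        lintegral_mono fun a => (measure_mono fun x hx => mem_closedBall'.2 hx).trans (hc (f a))
    _ = c := by simp

theorem interpProb_le (d n : ℕ) {ρ : ℝ} (hρ0 : 0 ≤ ρ) (hρ : 1 ≤ 2 * ρ ^ 2) :
    interpProb d n ≤ ENNReal.ofReal ((n + 1) * ρ ^ d) := by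
  set μ := Measure.pi fun _ : Fin n => uniformBall d
  set ν := uniformBall d
  have hsamples : ∀ᵐ p ∂μ.prod ν, ∀ i, p.1 i ∈ closedBall (0 : EuclideanSpace ℝ (Fin d)) 1 :=
    eventually_all.2 fun i => (Measure.tendsto_eval_ae_ae.comp
      Measure.quasiMeasurePreserving_fst.tendsto_ae).eventually (ae_mem_closedBall_uniformBall d)
  have hcover : {p : (Fin n → EuclideanSpace ℝ (Fin d)) × EuclideanSpace ℝ (Fin d) |
      p.2 ∈ convexHull ℝ (Set.range p.1)} ≤ᵐ[μ.prod ν]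
      (Prod.snd ⁻¹' ball 0 ρ ∪ ⋃ i, {p : (Fin n → _) × _ | dist (p.1 i) p.2 ≤ ρ} : Set _) := by
    filter_upwards [hsamples] with p hp hmem
    rcases convexHull_subset_ball_union_closedBall (Set.range_subset_iff.2 hp) hρ0 hρ hmem
      with hcenter | hclose
    · exact Or.inl hcenter
    · obtain ⟨_, ⟨i, rfl⟩, hi⟩ := Set.mem_iUnion₂.1 hclose
      exact Or.inr (Set.mem_iUnion.2 ⟨i, mem_closedBall'.1 hi⟩)
  have hcenter : μ.prod ν (Prod.snd ⁻¹' ball 0 ρ) ≤ ENNReal.ofReal (ρ ^ d) := by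
    rw [← Measure.snd_apply measurableSet_ball, Measure.snd_prod]
    exact (measure_mono ball_subset_closedBall).trans (uniformBall_closedBall_le d 0 hρ0)
  have hnear : ∀ i, μ.prod ν {p | dist (p.1 i) p.2 ≤ ρ} ≤ ENNReal.ofReal (ρ ^ d) := fun i =>
    prod_setOf_dist_le_le μ ν (measurable_pi_apply i) fun z => uniformBall_closedBall_le d z hρ0
  calc interpProb d n
      ≤ μ.prod ν (Prod.snd ⁻¹' ball 0 ρ) + ∑ i, μ.prod ν {p | dist (p.1 i) p.2 ≤ ρ} :=
        (measure_mono_ae hcover).trans <|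
          (measure_union_le _ _).trans (add_le_add_right (measure_iUnion_fintype_le _ _) _)
    _ ≤ ENNReal.ofReal (ρ ^ d) + ∑ _ : Fin n, ENNReal.ofReal (ρ ^ d) :=
        add_le_add hcenter (Finset.sum_le_sum fun i _ => hnear i)
    _ = ENNReal.ofReal ((n + 1) * ρ ^ d) := by
        rw [ENNReal.ofReal_mul (by positivity), ENNReal.ofReal_add (by positivity) zero_le_one]
        simp [add_mul, add_comm]

theorem tendsto_add_one_mul_of_tendsto_mul_natCast {f : ℕ → ℕ} {a : ℕ → ℝ} (ha0 : ∀ d, 0 ≤ a d)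
    (ha : Tendsto a atTop (nhds 0)) (h : Tendsto (fun d => (f d : ℝ) * d * a d) atTop (nhds 0)) :
    Tendsto (fun d => ((f d : ℝ) + 1) * a d) atTop (nhds 0) := by
  have hf : Tendsto (fun d => (f d : ℝ) * a d) atTop (nhds 0) := by
    have hnonneg d : 0 ≤ (f d : ℝ) * a d := mul_nonneg (Nat.cast_nonneg _) (ha0 d)
    refine squeeze_zero' (Eventually.of_forall hnonneg) ?_ h
    filter_upwards [eventually_ge_atTop 1] with d hd
    have hd' : (1 : ℝ) ≤ d := by exact_mod_cast hd
    nlinarith [hnonneg d]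
  simpa [add_mul] using hf.add ha

theorem two_rpow_neg_half_pow (d : ℕ) : ((2 : ℝ) ^ (-(1 : ℝ) / 2)) ^ d = 2 ^ (-(d : ℝ) / 2) := by
  rw [← Real.rpow_natCast, ← Real.rpow_mul zero_le_two]
  ring_nf

theorem barany_furedi_lower (N : ℕ → ℕ)
    (hN : Tendsto (fun d : ℕ => (N d : ℝ) * d * (2 : ℝ) ^ (-(d : ℝ) / 2)) atTop (nhds 0)) :
    Tendsto (fun d : ℕ => interpProb d (N d)) atTop (nhds 0) := by
  set ρ : ℝ := 2 ^ (-(1 : ℝ) / 2)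
  have hρ0 : 0 ≤ ρ := by positivity
  have hρ1 : ρ < 1 := Real.rpow_lt_one_of_one_lt_of_neg one_lt_two (by norm_num)
  have hρ2 : 1 ≤ 2 * ρ ^ 2 := by rw [two_rpow_neg_half_pow]; norm_num
  have hbound : Tendsto (fun d => ((N d : ℝ) + 1) * ρ ^ d) atTop (nhds 0) :=
    tendsto_add_one_mul_of_tendsto_mul_natCast (fun d => pow_nonneg hρ0 d)
      (tendsto_pow_atTop_nhds_zero_of_lt_one hρ0 hρ1) (by simpa only [ρ, two_rpow_neg_half_pow] using hN)
  exact tendsto_of_tendsto_of_tendsto_of_le_of_le tendsto_const_nhds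
    (by simpa using ENNReal.tendsto_ofReal hbound) (fun _ => bot_le)
    fun d => interpProb_le d (N d) hρ0 hρ2
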